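/- arXiv:2404.18753 — 9 statements merged into one kernel-verified Lean document; each statement's English description precedes it below -/
import Mathlib

section
/- If K is a fixer of a finite transitive permutation group G ≤ Sym(Ω) with point stabiliser H and |Ω| > 1, then KH ≠ G (K and H do not give a factorisation of G). -/
open Pointwise

/-- Jordan: a finite group acting pretransitively on a finite nontrivial set has a
derangement. -/
lemma jordan_derangement (G Ω : Type*) [Group G] [Finite G] [Finite Ω] [Nontrivial Ω]
    [MulAction G Ω] [MulAction.IsPretransitive G Ω] :
    ∃ g : G, ∀ x : Ω, g • x ≠ x := by
  classical
  cases nonempty_fintype G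
  cases nonempty_fintype Ω
  by_contra h
  push_neg at h
  -- every g has a fixed point
  have hfix : ∀ g : G, 1 ≤ Fintype.card (MulAction.fixedBy Ω g) := by
    intro g
    obtain ⟨x, hx⟩ := h g
    exact Fintype.card_pos_iff.mpr ⟨⟨x, hx⟩⟩
  have hquot : Fintype.card (MulAction.orbitRel.Quotient G Ω) = 1 := by
    have : Subsingleton (MulAction.orbitRel.Quotient G Ω) := by
      constructor
      rintro ⟨x⟩ ⟨y⟩
      obtain ⟨g, hg⟩ := MulAction.exists_smul_eq G y x
      exact Quotient.sound ⟨g, hg⟩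
    have : Nonempty (MulAction.orbitRel.Quotient G Ω) :=
      Nonempty.map (Quotient.mk _) inferInstance
    exact Fintype.card_eq_one_iff.mpr ⟨Classical.arbitrary _, fun b => Subsingleton.elim _ _⟩
  have hburn := MulAction.sum_card_fixedBy_eq_card_orbits_mul_card_group G Ω
  rw [hquot, one_mul] at hburn
  have hlt : ∑ g : G, (1 : ℕ) < ∑ g : G, Fintype.card (MulAction.fixedBy Ω g) := by
    refine Finset.sum_lt_sum (fun i _ => hfix i) ⟨1, Finset.mem_univ _, ?_⟩
    have : Fintype.card (MulAction.fixedBy Ω (1 : G)) = Fintype.card Ω := by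
      apply Fintype.card_congr
      refine Equiv.subtypeUnivEquiv ?_
      intro x; simp [MulAction.mem_fixedBy]
    rw [this]
    exact Fintype.one_lt_card
  simp only [Finset.sum_const, Finset.card_univ, smul_eq_mul, mul_one] at hlt
  omega

/-- If `K` is a fixer of a finite transitive permutation group `G` on `Ω` with
`|Ω| > 1` and point stabiliser `H = G_ω`, then `KH ≠ G`. -/
theorem stmt_3 {G Ω : Type*} [Group G] [Finite G] [Finite Ω] [Nontrivial Ω] [MulAction G Ω]
    (h_trans : MulAction.IsPretransitive G Ω) (ω : Ω) (K : Subgroup G)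
    (hK : ∀ k ∈ K, ∃ x : Ω, k • x = x) :
    (K : Set G) * (MulAction.stabilizer G ω : Set G) ≠ Set.univ := by
  intro heq
  -- K acts pretransitively on Ω
  have horb : ∀ x : Ω, ∃ k : K, (k : G) • ω = x := by
    intro x
    obtain ⟨g, hg⟩ := h_trans.exists_smul_eq ω x
    have : g ∈ (K : Set G) * (MulAction.stabilizer G ω : Set G) := heq ▸ Set.mem_univ g
    obtain ⟨k, hk, h, hh, rfl⟩ := this
    refine ⟨⟨k, hk⟩, ?_⟩
    have : h • ω = ω := hh
    rw [← hg, mul_smul, this]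
  have : MulAction.IsPretransitive K Ω := by
    constructor
    intro x y
    obtain ⟨k1, hk1⟩ := horb x
    obtain ⟨k2, hk2⟩ := horb y
    refine ⟨k2 * k1⁻¹, ?_⟩
    have : ((k1 : G))⁻¹ • x = ω := by rw [← hk1, inv_smul_smul]
    calc (k2 * k1⁻¹ : K) • x = (k2 : G) • ((k1 : G))⁻¹ • x := by
          rw [Subgroup.smul_def, Subgroup.coe_mul, mul_smul]; rfl
      _ = y := by rw [this, hk2]
  obtain ⟨k, hk⟩ := jordan_derangement K Ω
  obtain ⟨x, hx⟩ := hK k k.2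
  exact hk x hx
end

section
/- Let q = p^f with p prime, q = q₀^r with r prime, and let F_{q₁} be a subfield of F_q. If F_{q₁} ⊄ F_{q₀} or r ≠ p, then the image of F_{q₀} under the relative trace Tr_{F_q/F_{q₁}} equals F_{q₁} ∩ F_{q₀}. -/
/-- Let `F = F_q` with `q = p^f`, `p` prime, let `K₀ = F_{q₀}` be the subfield of `F` with
`[F : K₀] = r` prime, and let `K₁ = F_{q₁}` be any subfield of `F`. If `K₁ ⊄ K₀` or
`r ≠ p`, then the image of `K₀` under the relative trace `Tr_{F/K₁}` equals `K₁ ∩ K₀`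
(all viewed inside `F`). -/
theorem stmt_7 {p r f : ℕ} (hp : p.Prime) (hr : r.Prime)
    (K₁ K₀ F : Type*) [Field K₁] [Field K₀] [Field F] [Finite F]
    [Algebra K₀ F] [Algebra K₁ F] [FiniteDimensional K₁ F]
    [CharP F p] (hq : Nat.card F = p ^ f)
    (hrank : Module.finrank K₀ F = r)
    (hcond : ¬ ((algebraMap K₁ F).range ≤ (algebraMap K₀ F).range) ∨ r ≠ p) :
    (fun x : F => algebraMap K₁ F (Algebra.trace K₁ F x)) '' ((algebraMap K₀ F).range : Set F)
      = ((algebraMap K₁ F).range : Set F) ∩ ((algebraMap K₀ F).range : Set F) := by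
  classical
  haveI : Fintype F := Fintype.ofFinite F
  haveI : Finite K₀ := Finite.of_injective _ (algebraMap K₀ F).injective
  haveI : Finite K₁ := Finite.of_injective _ (algebraMap K₁ F).injective
  haveI : Fintype K₀ := Fintype.ofFinite K₀
  haveI : FiniteDimensional K₀ F := Module.Finite.of_finite
  set q₀ := Fintype.card K₀ with hq₀
  have h1q : 1 < q₀ := Fintype.one_lt_card
  have hpow : ∀ k : K₀, algebraMap K₀ F k ^ q₀ = algebraMap K₀ F k := fun k => by
    rw [← map_pow, FiniteField.pow_card]
  -- any root of X^q₀ = X lies in the range of K₀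
  have hroot : ∀ y : F, y ^ q₀ = y → y ∈ (algebraMap K₀ F).range := by
    intro y hy
    set P : Polynomial F := Polynomial.X ^ q₀ - Polynomial.X with hP
    have hPne : P ≠ 0 := by
      intro h0
      have hc := congrArg (fun Q => Polynomial.coeff Q q₀) h0
      simp only [hP, Polynomial.coeff_sub, Polynomial.coeff_X_pow, Polynomial.coeff_X,
        Polynomial.coeff_zero, if_pos rfl] at hc
      rw [if_neg (by omega : ¬ (1 = q₀))] at hc
      simp at hc
    have hdeg : P.natDegree ≤ q₀ := by
      refine le_trans (Polynomial.natDegree_sub_le _ _) ?_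
      simp [Polynomial.natDegree_X_pow, Polynomial.natDegree_X]
      omega
    set T : Finset F := P.roots.toFinset with hT
    set Af : Finset F := Finset.univ.image (algebraMap K₀ F) with hAf
    have hsub : Af ⊆ T := by
      intro x hx
      rw [hAf, Finset.mem_image] at hx
      obtain ⟨k, -, rfl⟩ := hx
      rw [hT, Multiset.mem_toFinset, Polynomial.mem_roots hPne]
      simp [hP, Polynomial.IsRoot, sub_eq_zero, hpow k]
    have hcardA : Af.card = q₀ := by
      rw [hAf, Finset.card_image_of_injective _ (algebraMap K₀ F).injective, Finset.card_univ]
    have hcardT : T.card ≤ q₀ :=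
      le_trans P.roots.toFinset_card_le (le_trans (Polynomial.card_roots' P) hdeg)
    have heq : Af = T := Finset.eq_of_subset_of_card_le hsub (by omega)
    have hyT : y ∈ T := by
      rw [hT, Multiset.mem_toFinset, Polynomial.mem_roots hPne]
      simp [hP, Polynomial.IsRoot, sub_eq_zero, hy]
    rw [← heq, hAf, Finset.mem_image] at hyT
    obtain ⟨k, -, hk⟩ := hyT
    exact ⟨k, hk⟩
  -- the trace of an element of (range K₀) lies in (range K₀)
  have hTA : ∀ x : F, x ∈ (algebraMap K₀ F).range →
      algebraMap K₁ F (Algebra.trace K₁ F x) ∈ (algebraMap K₀ F).range := by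
    intro x hx
    rw [trace_eq_sum_automorphisms]
    apply Subring.sum_mem
    intro σ _
    obtain ⟨k, rfl⟩ := hx
    exact hroot _ (by rw [← map_pow, hpow])
  -- main nonvanishing lemma
  have main : ∃ x : F, x ∈ (algebraMap K₀ F).range ∧
      algebraMap K₁ F (Algebra.trace K₁ F x) ≠ 0 := by
    by_cases hBA : (algebraMap K₁ F).range ≤ (algebraMap K₀ F).range
    · -- K₁ ⊆ K₀, use r ≠ p
      have hrp : r ≠ p := hcond.resolve_left (fun h => h hBA)
      have hρ : ∀ k₁ : K₁, ∃ k₀ : K₀, algebraMap K₀ F k₀ = algebraMap K₁ F k₁ :=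
        fun k₁ => hBA ⟨k₁, rfl⟩
      choose ρ hρ' using hρ
      have hinj := (algebraMap K₀ F).injective
      let ρR : K₁ →+* K₀ :=
        { toFun := ρ
          map_one' := hinj (by rw [hρ', map_one, map_one])
          map_mul' := fun a b => hinj (by rw [hρ', map_mul, map_mul, hρ', hρ'])
          map_zero' := hinj (by rw [hρ', map_zero, map_zero])
          map_add' := fun a b => hinj (by rw [hρ', map_add, map_add, hρ', hρ']) }
      letI : Algebra K₁ K₀ := ρR.toAlgebra
      haveI : IsScalarTower K₁ K₀ F :=
        IsScalarTower.of_algebraMap_eq (fun k₁ => (hρ' k₁).symm)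
      haveI : FiniteDimensional K₁ K₀ := Module.Finite.of_finite
      obtain ⟨k, hk⟩ := Algebra.trace_surjective K₁ K₀ (1 : K₁)
      refine ⟨algebraMap K₀ F k, ⟨k, rfl⟩, ?_⟩
      have htr : Algebra.trace K₁ F (algebraMap K₀ F k) = (r : K₁) := by
        rw [← Algebra.trace_trace (S := K₀), Algebra.trace_algebraMap, hrank, map_nsmul, hk,
          nsmul_eq_mul, mul_one]
      rw [htr]
      obtain ⟨c, hc⟩ := CharP.exists K₁
      haveI := hc
      haveI : CharP F c := charP_of_injective_algebraMap (algebraMap K₁ F).injective c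
      have hcp : c = p := CharP.eq F ‹CharP F c› ‹CharP F p›
      haveI : CharP K₁ p := hcp ▸ hc
      have hr0 : (r : K₁) ≠ 0 := by
        rw [Ne, CharP.cast_eq_zero_iff K₁ p r]
        intro hdvd
        rcases (hr.eq_one_or_self_of_dvd p hdvd) with h | h
        · exact hp.one_lt.ne' h
        · exact hrp h.symm
      intro h
      exact hr0 ((algebraMap K₁ F).injective (by simpa using h))
    · -- K₁ ⊄ K₀
      by_contra hcon
      push_neg at hcon
      have h0 : ∀ x ∈ (algebraMap K₀ F).range, Algebra.trace K₁ F x = 0 := by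
        intro x hx
        have := hcon x hx
        have h' : algebraMap K₁ F (Algebra.trace K₁ F x) = algebraMap K₁ F 0 := by simpa using this
        exact (algebraMap K₁ F).injective h'
      set V : Submodule K₁ F := Submodule.span K₁ (((algebraMap K₀ F).range : Subring F) : Set F)
        with hV
      have hVmul : ∀ x ∈ V, ∀ y ∈ V, x * y ∈ V := by
        intro x hx y hy
        have hle : V * V ≤ V := by
          rw [hV, Submodule.span_mul_span]
          apply Submodule.span_le.mpr
          rintro z hz
          obtain ⟨a, ha, b, hb, rfl⟩ := hz
          exact Submodule.subset_span (Subring.mul_mem _ ha hb)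
        exact hle (Submodule.mul_mem_mul hx hy)
      let S : Subalgebra K₀ F :=
        { carrier := V
          add_mem' := fun ha hb => V.add_mem ha hb
          mul_mem' := fun {a b} ha hb => hVmul a ha b hb
          one_mem' := Submodule.subset_span (Subring.one_mem _)
          algebraMap_mem' := fun k => Submodule.subset_span ⟨k, rfl⟩ }
      haveI : IsSimpleOrder (Subalgebra K₀ F) :=
        Subalgebra.isSimpleOrder_of_finrank_prime K₀ F (hrank ▸ hr)
      rcases (IsSimpleOrder.eq_bot_or_eq_top S) with hS | hS
      · -- S = ⊥ : then range K₁ ≤ range K₀, contradiction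
        apply hBA
        rintro z ⟨c, rfl⟩
        have hz : algebraMap K₁ F c ∈ S := by
          show algebraMap K₁ F c ∈ V
          have h1 : (1 : F) ∈ V := Submodule.subset_span (Subring.one_mem _)
          have := V.smul_mem c h1
          rwa [Algebra.smul_def, mul_one] at this
        rw [hS] at hz
        rcases Algebra.mem_bot.mp hz with ⟨k, hk⟩
        exact ⟨k, hk⟩
      · -- S = ⊤ : trace vanishes everywhere, contradicting surjectivity
        have hvan : ∀ x ∈ V, Algebra.trace K₁ F x = 0 := by
          intro x hx
          induction hx using Submodule.span_induction with
          | mem z hz => exact h0 z hz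
          | zero => simp
          | add a b _ _ ha hb => rw [map_add, ha, hb, add_zero]
          | smul c a _ ha => rw [LinearMap.map_smul, ha, smul_zero]
        obtain ⟨x, hx⟩ := Algebra.trace_surjective K₁ F (1 : K₁)
        have hxV : x ∈ V := by
          have hxS : x ∈ S := hS ▸ Algebra.mem_top (R := K₀)
          exact hxS
        rw [hvan x hxV] at hx
        exact one_ne_zero hx.symm
  -- conclude
  apply Set.eq_of_subset_of_subset
  · rintro _ ⟨x, hx, rfl⟩
    exact ⟨⟨_, rfl⟩, hTA x hx⟩
  · rintro y ⟨hyB, hyA⟩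
    obtain ⟨x₀, hx₀A, hx₀⟩ := main
    by_cases hy0 : y = 0
    · exact ⟨0, Subring.zero_mem _, by simp [hy0]⟩
    · set t := algebraMap K₁ F (Algebra.trace K₁ F x₀) with ht
      have htA : t ∈ (algebraMap K₀ F).range := hTA x₀ hx₀A
      obtain ⟨b, hb⟩ := hyB
      obtain ⟨a, ha⟩ := hyA
      obtain ⟨tb, htb⟩ : t ∈ (algebraMap K₁ F).range := ⟨_, rfl⟩
      obtain ⟨ta, hta⟩ := htA
      have hcB : y * t⁻¹ = algebraMap K₁ F (b * tb⁻¹) := by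
        rw [map_mul, map_inv₀, hb, htb]
      have hcA : y * t⁻¹ ∈ (algebraMap K₀ F).range :=
        ⟨a * ta⁻¹, by rw [map_mul, map_inv₀, ha, hta]⟩
      refine ⟨(y * t⁻¹) * x₀, Subring.mul_mem _ hcA hx₀A, ?_⟩
      show algebraMap K₁ F (Algebra.trace K₁ F ((y * t⁻¹) * x₀)) = y
      calc algebraMap K₁ F (Algebra.trace K₁ F ((y * t⁻¹) * x₀))
          = algebraMap K₁ F ((b * tb⁻¹) * Algebra.trace K₁ F x₀) := by
            rw [hcB, ← Algebra.smul_def, map_smul, smul_eq_mul]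
        _ = (y * t⁻¹) * t := by rw [map_mul, ← hcB, ← ht]
        _ = y := inv_mul_cancel_right₀ hx₀ y
end

section
/- In the group Γ = AΓL₁(q) = (F_q⁺ : F_q^×) : ⟨φ⟩ with q = q₁^s and φ^i of order s, if a, b ∈ F_q satisfy Tr_{F_q/F_{q₁}}(a) = Tr_{F_q/F_{q₁}}(b), then the elements (a,1)φ^i and (b,1)φ^i are conjugate by an element of the translation subgroup F_q⁺. -/
/-- An element `(a, λ)·τ` of `Γ = AΓL₁(q) = (F_q⁺ : F_q^×) : ⟨φ⟩` is encoded as the triple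
`(a, λ, τ) : F × F × (F ≃+* F)`, with the multiplication of the paper:
`(a,λ)φ^i (b,μ)φ^j = (a + λ⁻¹ b^{φ^{-i}}, λ μ^{φ^{-i}}) φ^{i+j}`. -/
def agmul {F : Type*} [Field F] (x y : F × F × (F ≃+* F)) : F × F × (F ≃+* F) :=
  (x.1 + x.2.1⁻¹ * x.2.2.symm y.1, x.2.1 * x.2.2.symm y.2.1, x.2.2 * y.2.2)

theorem hilbert90_add {F : Type*} [Field F] [Finite F] (σ : F ≃+* F) (s : ℕ)
    (hs : orderOf σ = s) (hs0 : 0 < s) (x : F)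
    (hx : ∑ k ∈ Finset.range s, (σ ^ k) x = 0) : ∃ e : F, σ e - e = x := by
  have hpow : σ ^ s = 1 := by rw [← hs]; exact pow_orderOf_eq_one σ
  -- f y = σ y - y
  set f : F →+ F := AddMonoidHom.mk' (fun y => σ y - y) (by intro u v; simp [map_add]; ring)
    with hf
  -- T y = ∑ σ^k y
  set T : F →+ F := AddMonoidHom.mk' (fun y => ∑ k ∈ Finset.range s, (σ ^ k) y)
    (by intro u v; simp [map_add, Finset.sum_add_distrib]) with hT
  have hshift : ∀ y : F, ∑ k ∈ Finset.range s, (σ ^ (k + 1)) y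
      = ∑ k ∈ Finset.range s, (σ ^ k) y := by
    intro y
    have h1 : ∑ k ∈ Finset.range (s + 1), (σ ^ k) y
        = ∑ k ∈ Finset.range s, (σ ^ (k + 1)) y + (σ ^ 0) y := Finset.sum_range_succ' _ s
    have h2 : ∑ k ∈ Finset.range (s + 1), (σ ^ k) y
        = ∑ k ∈ Finset.range s, (σ ^ k) y + (σ ^ s) y := Finset.sum_range_succ _ s
    have : (σ ^ s) y = (σ ^ 0) y := by rw [hpow]; simp
    rw [this] at h2
    have := h1.symm.trans h2
    exact add_right_cancel this
  have hTσ : ∀ y : F, T (σ y) = T y := by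
    intro y
    have : ∀ k, (σ ^ k) (σ y) = (σ ^ (k + 1)) y := by
      intro k; rw [pow_succ]; rfl
    simp only [hT, AddMonoidHom.mk'_apply]
    rw [Finset.sum_congr rfl fun k _ => this k, hshift]
  have hσT : ∀ y : F, σ (T y) = T y := by
    intro y
    simp only [hT, AddMonoidHom.mk'_apply, map_sum]
    have : ∀ k, σ ((σ ^ k) y) = (σ ^ (k + 1)) y := by
      intro k; rw [pow_succ']; rfl
    rw [Finset.sum_congr rfl fun k _ => this k, hshift]
  -- T ≠ 0 by Dedekind independence
  have hTne : ∃ u : F, T u ≠ 0 := by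
    by_contra hc
    push_neg at hc
    have vinj : Function.Injective
        (fun k : Fin s => ((σ ^ (k : ℕ)).toRingHom.toMonoidHom : F →* F)) := by
      intro k l hkl
      have : σ ^ (k : ℕ) = σ ^ (l : ℕ) := by
        ext y
        exact DFunLike.congr_fun hkl y
      have := pow_injOn_Iio_orderOf (x := σ) (by simp [hs, k.2]) (by simp [hs, l.2]) this
      exact Fin.ext this
    have li := (linearIndependent_monoidHom F F).comp _ vinj
    have := Fintype.linearIndependent_iff.mp li (fun _ => 1) ?_ ⟨0, hs0⟩
    · exact one_ne_zero this
    · funext y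
      simp only [Finset.sum_apply, Pi.smul_apply, one_smul, Function.comp_apply, Pi.zero_apply]
      have := hc y
      simp only [hT, AddMonoidHom.mk'_apply] at this
      exact (Fin.sum_univ_eq_sum_range (fun k => (σ ^ k) y) s).trans this
  -- range T = ker f
  have hrange_ker : T.range = f.ker := by
    apply le_antisymm
    · rintro _ ⟨y, rfl⟩
      simp only [AddMonoidHom.mem_ker, hf, AddMonoidHom.mk'_apply, sub_eq_zero]
      exact hσT y
    · intro z hz
      have hzfix : σ z = z := by
        simpa only [AddMonoidHom.mem_ker, hf, AddMonoidHom.mk'_apply, sub_eq_zero] using hz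
      obtain ⟨u, hu⟩ := hTne
      have htfix : σ (T u) = T u := hσT u
      have hfix_pow : ∀ (w : F), σ w = w → ∀ k, (σ ^ k) w = w := by
        intro w hw k
        induction k with
        | zero => rfl
        | succ n ih => rw [pow_succ']; show σ ((σ ^ n) w) = w; rw [ih, hw]
      have hmul : ∀ (lam y : F), σ lam = lam → T (lam * y) = lam * T y := by
        intro lam y hlam
        simp only [hT, AddMonoidHom.mk'_apply, Finset.mul_sum]
        refine Finset.sum_congr rfl fun k _ => ?_
        rw [map_mul, hfix_pow lam hlam k]
      have hlamfix : σ (z * (T u)⁻¹) = z * (T u)⁻¹ := by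
        rw [map_mul, map_inv₀, hzfix, htfix]
      refine ⟨z * (T u)⁻¹ * u, ?_⟩
      rw [hmul _ _ hlamfix, mul_assoc, inv_mul_cancel₀ hu, mul_one]
  -- range f ≤ ker T
  have hle : f.range ≤ T.ker := by
    rintro _ ⟨y, rfl⟩
    simp only [AddMonoidHom.mem_ker, hf, AddMonoidHom.mk'_apply, map_sub]
    rw [hTσ y, sub_self]
  -- cardinalities
  have card1 : Nat.card f.range * Nat.card f.ker = Nat.card F := by
    rw [Nat.card_congr (QuotientAddGroup.quotientKerEquivRange f).toEquiv |>.symm]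
    exact (AddSubgroup.card_eq_card_quotient_mul_card_addSubgroup f.ker).symm
  have card2 : Nat.card T.range * Nat.card T.ker = Nat.card F := by
    rw [Nat.card_congr (QuotientAddGroup.quotientKerEquivRange T).toEquiv |>.symm]
    exact (AddSubgroup.card_eq_card_quotient_mul_card_addSubgroup T.ker).symm
  rw [hrange_ker] at card2
  have hkerpos : 0 < Nat.card f.ker := Nat.card_pos
  have hcard : Nat.card T.ker = Nat.card f.range := by
    have : Nat.card f.ker * Nat.card T.ker = Nat.card f.range * Nat.card f.ker := by
      rw [card1, card2]
    rw [mul_comm (Nat.card f.range)] at this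
    exact Nat.eq_of_mul_eq_mul_left hkerpos this
  have heq : f.range = T.ker := AddSubgroup.eq_of_le_of_card_ge hle (le_of_eq hcard)
  have hxker : x ∈ T.ker := by
    simp only [AddMonoidHom.mem_ker, hT, AddMonoidHom.mk'_apply]; exact hx
  rw [← heq] at hxker
  obtain ⟨e, he⟩ := hxker
  exact ⟨e, he⟩

/-- In `Γ = AΓL₁(q)` with `q = q₁^s`, `σ = φ^i` of order `s` (so `⟨σ⟩ = Gal(F_q/F_{q₁})` and
`Tr_{F_q/F_{q₁}}(a) = ∑_{k<s} σ^k(a)`): if `Tr(a) = Tr(b)` then `(a,1)φ^i` and `(b,1)φ^i`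
are conjugate by an element `(c,1)` of the translation subgroup `F_q⁺`. -/
theorem stmt_8 {F : Type*} [Field F] [Finite F] (σ : F ≃+* F) (s : ℕ)
    (hs : orderOf σ = s) (hs0 : 0 < s) (a b : F)
    (h : ∑ k ∈ Finset.range s, (σ ^ k) a = ∑ k ∈ Finset.range s, (σ ^ k) b) :
    ∃ c : F, agmul (a, 1, σ) (c, 1, 1) = agmul (c, 1, 1) (b, 1, σ) := by
  have hx : ∑ k ∈ Finset.range s, (σ ^ k) (b - a) = 0 := by
    simp only [map_sub, Finset.sum_sub_distrib, h, sub_self]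
  obtain ⟨e, he⟩ := hilbert90_add σ s hs hs0 (b - a) hx
  refine ⟨-σ e, ?_⟩
  have hb : (RingEquiv.symm (1 : F ≃+* F)) b = b := rfl
  simp only [agmul, inv_one, one_mul, map_one, mul_one, map_neg,
    RingEquiv.symm_apply_apply, hb, Prod.mk.injEq]
  exact ⟨by linear_combination he, trivial⟩
end

section
/- In Γ = AΓL₁(q) with q = q₁^s and |φ^i| = s, if a, b ∈ F_q satisfy Tr_{F_q/F_{q₁}}(a) · Tr_{F_q/F_{q₁}}(b) ≠ 0, then (a,1)φ^i and (b,1)φ^i are conjugate by an element of F_q⁺ : F_{q₁}^×. -/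
open Finset

theorem Finset.sum_range_succ_eq_of_apply_eq {M : Type*} [AddCancelCommMonoid M] {f : ℕ → M}
    {s : ℕ} (hf : f s = f 0) : ∑ k ∈ range s, f (k + 1) = ∑ k ∈ range s, f k := by
  have h := sum_range_succ' f s
  rw [sum_range_succ, hf] at h
  exact add_right_cancel h.symm

namespace RingEquiv

variable {R : Type*} [CommRing R] (τ : R ≃+* R) (s : ℕ)

/-- `x ↦ ∑_{k<s} τᵏ x`; when `τ` generates `Gal(L/K)` and has order `s` this is `Tr_{L/K}`. -/
def relTrace : R →+ R := ∑ k ∈ range s, (τ ^ k).toAddMonoidHom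

@[simp]
theorem relTrace_apply (x : R) : relTrace τ s x = ∑ k ∈ range s, (τ ^ k) x :=
  AddMonoidHom.finsetSum_apply _ _ _

theorem pow_succ_apply (k : ℕ) (x : R) : (τ ^ (k + 1)) x = τ ((τ ^ k) x) := by
  rw [pow_succ']; rfl

theorem pow_succ_apply' (k : ℕ) (x : R) : (τ ^ (k + 1)) x = (τ ^ k) (τ x) := by
  rw [pow_succ]; rfl

variable {τ s}

theorem relTrace_apply_self (hτ : τ ^ s = 1) (x : R) : relTrace τ s (τ x) = relTrace τ s x := by
  simp only [relTrace_apply, ← pow_succ_apply']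
  exact sum_range_succ_eq_of_apply_eq (f := fun k ↦ (τ ^ k) x) (by rw [hτ, pow_zero])

theorem apply_relTrace (hτ : τ ^ s = 1) (x : R) : τ (relTrace τ s x) = relTrace τ s x := by
  conv_rhs => rw [← relTrace_apply_self hτ]
  simp only [relTrace_apply, map_sum, ← pow_succ_apply, pow_succ_apply']

theorem pow_apply_of_apply_eq {μ : R} (hμ : τ μ = μ) (k : ℕ) : (τ ^ k) μ = μ := by
  induction k with
  | zero => rfl
  | succ k ih => rw [pow_succ_apply, ih, hμ]

theorem relTrace_mul_of_apply_eq {μ : R} (hμ : τ μ = μ) (x : R) :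
    relTrace τ s (μ * x) = μ * relTrace τ s x := by
  simp only [relTrace_apply, map_mul, pow_apply_of_apply_eq hμ, mul_sum]

variable (τ s) in
def hilbert90Sum (θ x : R) : R := ∑ k ∈ range s, (∑ j ∈ range k, (τ ^ j) x) * (τ ^ k) θ

theorem hilbert90Sum_sub_apply (hτ : τ ^ s = 1) (θ x : R) :
    hilbert90Sum τ s θ x - τ (hilbert90Sum τ s θ x) =
      relTrace τ s θ * x - relTrace τ s x * θ := by
  have hS (k : ℕ) :
      τ (∑ j ∈ range k, (τ ^ j) x) = ∑ j ∈ range (k + 1), (τ ^ j) x - x := by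
    rw [sum_range_succ', pow_zero, map_sum]
    simp only [← pow_succ_apply]
    exact (add_sub_cancel_right _ x).symm
  have hshift : ∑ k ∈ range s, (∑ j ∈ range (k + 1), (τ ^ j) x) * (τ ^ (k + 1)) θ =
      hilbert90Sum τ s θ x + relTrace τ s x * θ := by
    have h := sum_range_succ' (fun k ↦ (∑ j ∈ range k, (τ ^ j) x) * (τ ^ k) θ) s
    rw [sum_range_succ, hτ] at h
    simpa [hilbert90Sum] using h.symm
  have hτD : τ (hilbert90Sum τ s θ x) =
      hilbert90Sum τ s θ x + relTrace τ s x * θ - x * relTrace τ s θ := calc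
    _ = ∑ k ∈ range s, (∑ j ∈ range (k + 1), (τ ^ j) x - x) * (τ ^ (k + 1)) θ := by
      simp only [hilbert90Sum, map_sum, map_mul, hS, pow_succ_apply]
    _ = _ := by
      simp only [sub_mul, sum_sub_distrib, ← mul_sum]
      rw [hshift, ← relTrace_apply_self hτ θ, relTrace_apply τ s (τ θ)]
      simp only [pow_succ_apply']
  rw [hτD]
  ring

theorem exists_sub_apply_eq_of_relTrace_eq_zero {F : Type*} [Field F] {σ : F ≃+* F}
    (hσ : σ ^ s = 1) {θ x : F} (hθ : relTrace σ s θ ≠ 0) (hx : relTrace σ s x = 0) :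
    ∃ c, c - σ c = x := by
  refine ⟨hilbert90Sum σ s θ x / relTrace σ s θ, ?_⟩
  rw [map_div₀, apply_relTrace hσ, ← sub_div, hilbert90Sum_sub_apply hσ, hx, zero_mul, sub_zero,
    mul_div_cancel_left₀ _ hθ]

end RingEquiv

theorem agmul_conj_eq_of_sub_apply_eq {F : Type*} [Field F] {σ : F ≃+* F} {a b e μ : F}
    (hμ : σ μ = μ) (he : e - σ e = μ⁻¹ * b - a) :
    agmul (a, 1, σ) (σ e, μ, 1) = agmul (σ e, μ, 1) (b, 1, σ) := by
  have hμ' : σ.symm μ = μ := σ.symm_apply_eq.mpr hμ.symm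
  simp only [agmul, inv_one, one_mul, mul_one, σ.symm_apply_apply, hμ', Prod.mk.injEq, and_true]
  refine ⟨?_, (mul_one μ).symm⟩
  change a + e = σ e + μ⁻¹ * b
  linear_combination he

open RingEquiv in
theorem stmt_9_general {F : Type*} [Field F] (σ : F ≃+* F) (s : ℕ)
    (hs : orderOf σ = s) (a b : F)
    (h : (∑ k ∈ Finset.range s, (σ ^ k) a) * (∑ k ∈ Finset.range s, (σ ^ k) b) ≠ 0) :
    ∃ c μ : F, μ ≠ 0 ∧ σ μ = μ ∧
      agmul (a, 1, σ) (c, μ, 1) = agmul (c, μ, 1) (b, 1, σ) := by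
  have hσ : σ ^ s = 1 := hs ▸ pow_orderOf_eq_one σ
  obtain ⟨ha, hb⟩ := mul_ne_zero_iff.mp h
  rw [← relTrace_apply] at ha hb
  set μ := relTrace σ s b / relTrace σ s a
  have hμ : σ μ = μ := by rw [map_div₀, apply_relTrace hσ, apply_relTrace hσ]
  have hx : relTrace σ s (μ⁻¹ * b - a) = 0 := by
    rw [map_sub, relTrace_mul_of_apply_eq (by rw [map_inv₀, hμ]), inv_div,
      div_mul_cancel₀ _ hb, sub_self]
  obtain ⟨e, he⟩ := exists_sub_apply_eq_of_relTrace_eq_zero hσ ha hx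
  exact ⟨σ e, μ, div_ne_zero hb ha, hμ, agmul_conj_eq_of_sub_apply_eq hμ he⟩

/-- In `Γ = AΓL₁(q)` with `q = q₁^s`, `σ = φ^i` of order `s` (so `⟨σ⟩ = Gal(F_q/F_{q₁})` and
`Tr_{F_q/F_{q₁}}(a) = ∑_{k<s} σ^k(a)`): if `Tr(a)·Tr(b) ≠ 0`, then `(a,1)φ^i` and `(b,1)φ^i`
are conjugate by an element `(c,μ)` of `F_q⁺ : F_{q₁}^×` (so `μ ≠ 0` is fixed by `σ`,
i.e. `μ ∈ F_{q₁}^×`). -/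
theorem stmt_9 {F : Type*} [Field F] [Finite F] (σ : F ≃+* F) (s : ℕ)
    (hs : orderOf σ = s) (hs0 : 0 < s) (a b : F)
    (h : (∑ k ∈ Finset.range s, (σ ^ k) a) * (∑ k ∈ Finset.range s, (σ ^ k) b) ≠ 0) :
    ∃ c μ : F, μ ≠ 0 ∧ σ μ = μ ∧
      agmul (a, 1, σ) (c, μ, 1) = agmul (c, μ, 1) (b, 1, σ) :=
  stmt_9_general σ s hs a b h
end

section
/- In Γ = AΓL₁(q) with q = q₁^s and |φ^i| = s, the s-th power of the element (a,1)φ^i equals (Tr_{F_q/F_{q₁}}(a), 1). Consequently, if Tr_{F_q/F_{q₁}}(a) = 0 and Tr_{F_q/F_{q₁}}(b) ≠ 0 then (a,1)φ^i and (b,1)φ^i have different orders. -/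
/-- `n`-th power in `Γ`, with identity element `(0,1,1)`. -/
def agpow {F : Type*} [Field F] : ℕ → F × F × (F ≃+* F) → F × F × (F ≃+* F)
  | 0, _ => (0, 1, 1)
  | n + 1, x => agmul x (agpow n x)

/-!
By induction, `((a,1)σ)^n = (∑_{k<n} σ^{-k} a, 1, σ^n)`. Hence the order of `(a,1)σ` is a
multiple of the order `s` of `σ`, and since `σ^{-k}` and `σ^k` run through the same automorphisms
for `k < s`, the `s`-th power is `(Tr a, 1)`: the order is exactly `s` iff `Tr a = 0`.
-/

theorem Finset.sum_range_inv_pow_eq_of_pow_eq_one {G M : Type*} [Group G] [AddCommMonoid M]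
    (f : G → M) {g : G} {s : ℕ} (hs : g ^ s = 1) :
    ∑ k ∈ range s, f (g⁻¹ ^ k) = ∑ k ∈ range s, f (g ^ k) := by
  have reflect : ∀ k < s, g⁻¹ ^ (s - 1 - k) = g ^ (k + 1) := fun k hk => by
    rw [inv_pow, inv_eq_iff_mul_eq_one, ← pow_add, show s - 1 - k + (k + 1) = s by omega, hs]
  calc ∑ k ∈ range s, f (g⁻¹ ^ k)
      = ∑ k ∈ range s, f (g⁻¹ ^ (s - 1 - k)) := (sum_range_reflect (fun k => f (g⁻¹ ^ k)) s).symm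
    _ = ∑ k ∈ range s, f (g ^ (k + 1)) :=
        sum_congr rfl fun k hk => by rw [reflect k (mem_range.1 hk)]
    _ = ∑ k ∈ range s, f (g ^ k) := by
        cases s with
        | zero => rfl
        | succ m => rw [sum_range_succ, hs, ← pow_zero g, sum_range_succ' (fun k => f (g ^ k))]

section AGammaL

variable {F : Type*} [Field F]

theorem agpow_mk_one (σ : F ≃+* F) (a : F) (n : ℕ) :
    agpow n (a, 1, σ) = (∑ k ∈ Finset.range n, (σ⁻¹ ^ k) a, 1, σ ^ n) := by
  induction n with
  | zero => simp [agpow]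
  | succ n ih =>
    rw [agpow, ih, agmul, Finset.sum_range_succ', pow_succ']
    simp only [inv_one, one_mul, map_one, map_sum, pow_zero, pow_succ', RingAut.one_apply,
      RingAut.mul_apply, RingAut.inv_apply, add_comm a]

theorem agpow_orderOf_mk_one (σ : F ≃+* F) (a : F) :
    agpow (orderOf σ) (a, 1, σ) = (∑ k ∈ Finset.range (orderOf σ), (σ ^ k) a, 1, 1) := by
  rw [agpow_mk_one, pow_orderOf_eq_one,
    Finset.sum_range_inv_pow_eq_of_pow_eq_one (fun τ : F ≃+* F => τ a) (pow_orderOf_eq_one σ)]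

theorem orderOf_dvd_of_agpow_mk_one_eq_one {σ : F ≃+* F} {a : F} {n : ℕ}
    (h : agpow n (a, 1, σ) = (0, 1, 1)) : orderOf σ ∣ n := by
  rw [agpow_mk_one] at h
  exact orderOf_dvd_of_pow_eq_one (congrArg (·.2.2) h)

/-- An element of infinite order gets order `sInf ∅ = 0` here. -/
theorem sInf_agpow_mk_one_eq_orderOf_iff {σ : F ≃+* F} (hσ : 0 < orderOf σ) (a : F) :
    sInf {n : ℕ | 0 < n ∧ agpow n (a, 1, σ) = (0, 1, 1)} = orderOf σ ↔
      ∑ k ∈ Finset.range (orderOf σ), (σ ^ k) a = 0 := by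
  set S := {n : ℕ | 0 < n ∧ agpow n (a, 1, σ) = (0, 1, 1)}
  constructor
  · intro h
    have hS : S.Nonempty := Set.nonempty_iff_ne_empty.2 fun hS => by
      rw [hS, Nat.sInf_empty] at h
      omega
    have hmem := (Nat.sInf_mem hS).2
    rw [h, agpow_orderOf_mk_one] at hmem
    exact congrArg (·.1) hmem
  · intro ha
    have hmem : orderOf σ ∈ S := ⟨hσ, by rw [agpow_orderOf_mk_one, ha]⟩
    refine le_antisymm (Nat.sInf_le hmem) (le_csInf ⟨_, hmem⟩ ?_)
    rintro n ⟨hn, hpow⟩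
    exact Nat.le_of_dvd hn (orderOf_dvd_of_agpow_mk_one_eq_one hpow)

end AGammaL

theorem stmt_10_general {F : Type*} [Field F] (σ : F ≃+* F) (s : ℕ)
    (hs : orderOf σ = s) (hs0 : 0 < s) :
    (∀ a : F, agpow s (a, 1, σ) = (∑ k ∈ Finset.range s, (σ ^ k) a, 1, 1)) ∧
    (∀ a b : F, (∑ k ∈ Finset.range s, (σ ^ k) a) = 0 →
      (∑ k ∈ Finset.range s, (σ ^ k) b) ≠ 0 →
      sInf {n : ℕ | 0 < n ∧ agpow n (a, 1, σ) = (0, 1, 1)} ≠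
        sInf {n : ℕ | 0 < n ∧ agpow n (b, 1, σ) = (0, 1, 1)}) := by
  subst hs
  refine ⟨agpow_orderOf_mk_one σ, fun a b ha hb => ?_⟩
  rw [(sInf_agpow_mk_one_eq_orderOf_iff hs0 a).2 ha]
  exact fun h => hb ((sInf_agpow_mk_one_eq_orderOf_iff hs0 b).1 h.symm)

/-- In `Γ = AΓL₁(q)` with `q = q₁^s` and `σ = φ^i` of order `s` (so
`Tr_{F_q/F_{q₁}}(a) = ∑_{k<s} σ^k(a)`): the `s`-th power of `(a,1)φ^i` equals `(Tr(a),1)`;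
consequently, if `Tr(a) = 0` and `Tr(b) ≠ 0` then `(a,1)φ^i` and `(b,1)φ^i` have different
orders (the least positive `n` with `n`-th power trivial differs). -/
theorem stmt_10 {F : Type*} [Field F] [Finite F] (σ : F ≃+* F) (s : ℕ)
    (hs : orderOf σ = s) (hs0 : 0 < s) :
    (∀ a : F, agpow s (a, 1, σ) = (∑ k ∈ Finset.range s, (σ ^ k) a, 1, 1)) ∧
    (∀ a b : F, (∑ k ∈ Finset.range s, (σ ^ k) a) = 0 →
      (∑ k ∈ Finset.range s, (σ ^ k) b) ≠ 0 →
      sInf {n : ℕ | 0 < n ∧ agpow n (a, 1, σ) = (0, 1, 1)} ≠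
        sInf {n : ℕ | 0 < n ∧ agpow n (b, 1, σ) = (0, 1, 1)}) :=
  stmt_10_general σ s hs hs0
end

section
/- Let q be even, G = SL₂(q)·⟨ψ⟩ ≤ ΓL₂(q) with ψ a field automorphism, and let x ∈ G be an element of even order such that the coset SL₂(q)x has odd order t in G/SL₂(q). Then x^t is an involution of SL₂(q), and ⟨x⟩ is G-conjugate to a subgroup of ⟨z⟩ × ⟨ψ⟩_{2'}, where z is the transposition matrix [[0,1],[1,0]]. -/
open Matrix

/-- The automorphism of `SL₂(F)` induced by a field automorphism `σ` (entrywise action). -/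
def slConjAut (F : Type*) [Field F] (σ : F ≃+* F) :
    MulAut (Matrix.SpecialLinearGroup (Fin 2) F) where
  toFun := Matrix.SpecialLinearGroup.map (σ : F →+* F)
  invFun := Matrix.SpecialLinearGroup.map (σ.symm : F →+* F)
  left_inv g := by ext i j; simp
  right_inv g := by ext i j; simp
  map_mul' := map_mul _

/-- The action of the Galois group (the group of field automorphisms of `F`) on `SL₂(F)`,
used to form `SL₂(q) ⋊ ⟨φ⟩ = SL₂(q).⟨φ⟩ ≤ ΓL₂(q)`. -/
def slGalAction (F : Type*) [Field F] :
    (F ≃+* F) →* MulAut (Matrix.SpecialLinearGroup (Fin 2) F) where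
  toFun := slConjAut F
  map_one' := by
    ext g i j
    rfl
  map_mul' σ τ := by
    ext g i j
    rfl

/-- The matrix `z = [[0,1],[1,0]]`, an involution in `SL₂(F)` when `char F = 2`. -/
def zmat (F : Type*) [Field F] [CharP F 2] : Matrix.SpecialLinearGroup (Fin 2) F :=
  ⟨!![0, 1; 1, 0], by simp [Matrix.det_fin_two_of, CharTwo.neg_eq]⟩

/-!
Write `x ^ t = b ∈ SL₂(q)`. Since `t` is odd, `b` has even order, and in characteristic `2` such
an element is an involution: an involution among its powers is conjugate to `z`, and the
centraliser of `z`, the matrices `[[a, c], [c, a]]`, is an elementary abelian `2`-group.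

Conjugating, we may assume `x ^ t = z`. Then `x = z * w` with `w = x ^ (t + 1)`, where `w ^ t = 1`,
`w` commutes with `z`, and `w` maps to `σ ∈ ⟨ψ⟩` of odd order `t`. So `w` and `σ` differ by an
element of `C(z)`, a group of exponent `2` normalised by `σ`; as `t` is odd, the cocycle this
defines is a coboundary, i.e. `w` is `C(z)`-conjugate to `σ`, and `x` is conjugate to `z * σ` with
`σ` in the odd part of `⟨ψ⟩`.
-/

open scoped MatrixGroups IsMulCommutative

section GroupTheory

variable {M : Type*} [Monoid M] {G : Type*} [Group G]

theorem even_orderOf_pow_of_odd {x : M} (hx : Even (orderOf x)) {t : ℕ}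
    (ht : Odd t) : Even (orderOf (x ^ t)) := by
  by_contra hodd
  rw [Nat.not_even_iff_odd] at hodd
  have hdvd : orderOf x ∣ t * orderOf (x ^ t) := orderOf_dvd_of_pow_eq_one (by
    rw [pow_mul, pow_orderOf_eq_one])
  exact Nat.not_even_iff_odd.2 (ht.mul hodd) (hx.two_dvd.trans hdvd |> even_iff_two_dvd.2)

theorem Subgroup.mem_zpowers_pow_of_coprime {ψ σ : G} {p : ℕ}
    (hσ : σ ∈ zpowers ψ) (hp : (orderOf σ).Coprime p) :
    σ ∈ zpowers (ψ ^ p ^ (orderOf ψ).factorization p) := by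
  obtain ⟨k, rfl⟩ := hσ
  have hdvd : ((p ^ (orderOf ψ).factorization p : ℕ) : ℤ) ∣ k * orderOf (ψ ^ k) := by
    refine (Int.natCast_dvd_natCast.2 (Nat.ordProj_dvd _ _)).trans ?_
    rw [orderOf_dvd_iff_zpow_eq_one, _root_.zpow_mul, zpow_natCast, pow_orderOf_eq_one]
  obtain ⟨m, hm⟩ := Int.dvd_of_dvd_mul_left_of_gcd_one hdvd (by
    rw [Int.gcd_natCast_natCast]; exact (hp.pow_right _).symm)
  exact ⟨m, by dsimp only; rw [hm, _root_.zpow_mul, zpow_natCast]⟩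

theorem inv_conj_pow (g x : G) (n : ℕ) :
    (g⁻¹ * x * g) ^ n = g⁻¹ * x ^ n * g := by
  simpa only [inv_inv] using conj_pow (a := g⁻¹) (b := x) (i := n)

theorem inv_conj_zpow (g x : G) (k : ℤ) :
    (g⁻¹ * x * g) ^ k = g⁻¹ * x ^ k * g := by
  simpa only [inv_inv] using conj_zpow (a := g⁻¹) (b := x) (i := k)

theorem Subgroup.conj_mem_of_mem_zpowers {K : Subgroup G} {x g : G}
    (h : g⁻¹ * x * g ∈ K) {y : G} (hy : y ∈ zpowers x) : g⁻¹ * y * g ∈ K := by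
  obtain ⟨k, rfl⟩ := hy
  exact inv_conj_zpow g x k ▸ K.zpow_mem h k

theorem Subgroup.exists_conj_eq_of_odd {A : Subgroup G}
    [IsMulCommutative A] (hA : ∀ a ∈ A, a * a = 1) {w s : G} (hs : ∀ a ∈ A, s * a * s⁻¹ ∈ A)
    (hws : w * s⁻¹ ∈ A) {t : ℕ} (ht : Odd t) (hwt : w ^ t = 1) (hst : s ^ t = 1) :
    ∃ c ∈ A, c⁻¹ * w * c = s := by
  have hmem : ∀ k : ℕ, w ^ k * (s ^ k)⁻¹ ∈ A := by
    intro k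
    induction k with
    | zero => simp [one_mem]
    | succ k ih =>
      have h : w ^ (k + 1) * (s ^ (k + 1))⁻¹ = w * s⁻¹ * (s * (w ^ k * (s ^ k)⁻¹) * s⁻¹) := by
        group
      rw [h]
      exact A.mul_mem hws (hs _ ih)
  let a : ℕ → A := fun k => ⟨_, hmem k⟩
  let f : A →* A :=
    ((MulAut.conj s).toMonoidHom.comp A.subtype).codRestrict A fun b => hs b b.2
  have ha : ∀ k, (a k : G) = w ^ k * (s ^ k)⁻¹ := fun _ => rfl
  have hf : ∀ b, (f b : G) = s * b * s⁻¹ := fun _ => rfl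
  have hrec : ∀ k, a (k + 1) = a 1 * f (a k) := fun k => Subtype.ext (by
    simp only [Subgroup.coe_mul, ha, hf]; group)
  have ha1 : a 1 ^ t = a 1 := by
    obtain ⟨m, rfl⟩ := ht
    have hsq : a 1 * a 1 = 1 := Subtype.ext (hA _ (a 1).2)
    rw [pow_succ, pow_mul, sq, hsq, one_pow, one_mul]
  -- `a (k + 1) = a 1 * s (a k) s⁻¹` and `a 0 = a t = 1`, so multiplying over `k < t` gives
  -- `c = a 1 * s c s⁻¹` (using `a 1 ^ t = a 1`), that is, `c s = w c`.
  let c := ∏ k ∈ Finset.range t, a k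
  have hc : c = a 1 * f c := by
    have hshift : ∏ k ∈ Finset.range t, a (k + 1) = c := by
      have h := (Finset.prod_range_succ' a t).symm.trans (Finset.prod_range_succ a t)
      rwa [show a 0 = 1 from Subtype.ext (by simp [a]), show a t = 1 from Subtype.ext (by
        simp [a, hwt, hst]), mul_one, mul_one] at h
    calc c = ∏ k ∈ Finset.range t, (a 1 * f (a k)) := by simp_rw [← hrec]; exact hshift.symm
      _ = a 1 * f c := by rw [Finset.prod_mul_distrib, Finset.prod_const, Finset.card_range, ha1,
        map_prod]
  refine ⟨(c : G), c.2, ?_⟩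
  have hcH : (c : G) * s = w * c := by
    have h := congrArg Subtype.val hc
    rw [Subgroup.coe_mul, ha, hf] at h
    exact eq_mul_inv_iff_mul_eq.mp (h.trans (by group))
  rw [mul_assoc, inv_mul_eq_iff_eq_mul, hcH]

end GroupTheory

namespace Matrix.SpecialLinearGroup

variable {F : Type*} [Field F] [CharP F 2]

theorem mul_self_eq_one_iff_of_charTwo (A : SL(2, F)) : A * A = 1 ↔ A 0 0 = A 1 1 := by
  have h2 : (2 : F) = 0 := CharTwo.two_eq_zero
  have hdet : A 0 0 * A 1 1 - A 0 1 * A 1 0 = 1 := by rw [← det_fin_two]; exact A.det_coe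
  rw [SpecialLinearGroup.ext_iff, Fin.forall_fin_two, Fin.forall_fin_two, Fin.forall_fin_two]
  simp only [coe_mul, coe_one, mul_apply, Fin.sum_univ_two, one_apply_eq, one_apply_ne,
    ne_eq, zero_ne_one, one_ne_zero, not_false_eq_true]
  constructor
  · rintro ⟨⟨h00, -⟩, -, h11⟩
    have : (A 0 0 - A 1 1) ^ 2 = 0 := by
      linear_combination h00 + h11 - 2 * hdet - 2 * A 0 1 * A 1 0 * h2
    exact sub_eq_zero.mp (pow_eq_zero_iff two_ne_zero |>.mp this)
  · intro hd
    refine ⟨⟨?_, ?_⟩, ?_, ?_⟩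
    · linear_combination hdet + A 0 0 * hd + A 0 1 * A 1 0 * h2
    · linear_combination A 0 1 * hd + A 0 1 * A 1 1 * h2
    · linear_combination A 1 0 * hd + A 1 0 * A 1 1 * h2
    · linear_combination hdet - A 1 1 * hd + A 0 1 * A 1 0 * h2

theorem coe_zmat : (zmat F : Matrix (Fin 2) (Fin 2) F) = !![0, 1; 1, 0] := rfl

theorem commute_zmat_iff (A : SL(2, F)) :
    Commute A (zmat F) ↔ A 0 0 = A 1 1 ∧ A 0 1 = A 1 0 := by
  rw [Commute, SemiconjBy, SpecialLinearGroup.ext_iff, Fin.forall_fin_two, Fin.forall_fin_two,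
    Fin.forall_fin_two]
  simp only [coe_mul, coe_zmat, mul_apply, Fin.sum_univ_two, Fin.isValue, of_apply, cons_val',
    cons_val_zero, cons_val_one, empty_val', cons_val_fin_one, zero_mul, one_mul, mul_zero, mul_one,
    zero_add, add_zero]
  constructor
  · rintro ⟨⟨h1, h0⟩, -⟩; exact ⟨h0, h1⟩
  · rintro ⟨h0, h1⟩; exact ⟨⟨h1, h0⟩, h0.symm, h1.symm⟩

theorem mul_self_eq_one_of_commute_zmat {A : SL(2, F)} (hA : Commute A (zmat F)) : A * A = 1 :=
  (mul_self_eq_one_iff_of_charTwo A).2 ((commute_zmat_iff A).1 hA).1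

theorem commute_of_commute_zmat {A B : SL(2, F)} (hA : Commute A (zmat F))
    (hB : Commute B (zmat F)) : Commute A B := by
  obtain ⟨hA0, hA1⟩ := (commute_zmat_iff A).1 hA
  obtain ⟨hB0, hB1⟩ := (commute_zmat_iff B).1 hB
  ext i j
  fin_cases i <;> fin_cases j <;> simp [mul_apply, Fin.sum_univ_two, hA0, hA1, hB0, hB1] <;> ring

theorem exists_conj_eq_zmat [PerfectRing F 2] {u : SL(2, F)} (hu : u * u = 1) (hu1 : u ≠ 1) :
    ∃ Q : SL(2, F), Q⁻¹ * u * Q = zmat F := by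
  have h2 : (2 : F) = 0 := CharTwo.two_eq_zero
  have hd := (mul_self_eq_one_iff_of_charTwo u).1 hu
  have hdet : u 0 0 * u 1 1 - u 0 1 * u 1 0 = 1 := by rw [← det_fin_two]; exact u.det_coe
  obtain ⟨p, s, hps⟩ : ∃ p s : F, u 1 0 * p ^ 2 - u 0 1 * s ^ 2 = 1 := by
    by_cases hc : u 1 0 = 0
    · have hb : u 0 1 ≠ 0 := by
        intro hb
        have ha : (u 0 0 - 1) ^ 2 = 0 := by
          linear_combination hdet + u 0 0 * hd + (1 - u 0 0) * h2 + u 0 1 * hc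
        apply hu1
        ext i j
        have ha1 : u 0 0 = 1 := sub_eq_zero.mp (pow_eq_zero_iff two_ne_zero |>.mp ha)
        fin_cases i <;> fin_cases j <;> simp [hb, hc, ← hd, ha1]
      obtain ⟨s, hs⟩ := surjective_frobenius F 2 (-(u 0 1)⁻¹)
      rw [frobenius_def] at hs
      exact ⟨0, s, by rw [hs]; field_simp; ring⟩
    · obtain ⟨p, hp⟩ := surjective_frobenius F 2 (u 1 0)⁻¹
      rw [frobenius_def] at hp
      exact ⟨p, 0, by rw [hp]; field_simp; ring⟩
  -- The columns of `Q` are `v = (p, s)` and `u v`, so that `u Q = Q z`.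
  obtain ⟨Q, hQ⟩ : ∃ Q : SL(2, F),
      (Q : Matrix (Fin 2) (Fin 2) F) = !![p, u 0 0 * p + u 0 1 * s; s, u 1 0 * p + u 0 0 * s] :=
    ⟨⟨_, by rw [det_fin_two_of]; linear_combination hps⟩, rfl⟩
  refine ⟨Q, ?_⟩
  rw [mul_assoc, inv_mul_eq_iff_eq_mul]
  ext i j
  fin_cases i <;> fin_cases j <;> simp only [Fin.zero_eta, Fin.mk_one,
    Fin.isValue, coe_mul, hQ, coe_zmat, mul_apply, of_apply, cons_val', cons_val_zero, cons_val_one,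
    cons_val_fin_one, Fin.sum_univ_two, mul_zero, mul_one, zero_add, add_zero]
  · linear_combination p * hdet + u 0 0 * p * hd + (u 0 1 * u 1 0 * p + u 0 0 * u 0 1 * s) * h2
  · linear_combination -s * hd
  · linear_combination s * hdet + u 1 0 * p * hd + (u 1 0 * u 1 1 * p + u 0 1 * u 1 0 * s) * h2

theorem orderOf_eq_two_of_even [PerfectRing F 2] {b : SL(2, F)} (hb : Even (orderOf b))
    (hb0 : orderOf b ≠ 0) : orderOf b = 2 := by
  obtain ⟨m, hm⟩ := hb
  have hm0 : m ≠ 0 := by rintro rfl; exact hb0 hm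
  obtain ⟨Q, hQ⟩ := exists_conj_eq_zmat (u := b ^ m)
    (by rw [← pow_add, ← hm, pow_orderOf_eq_one]) (pow_ne_one_of_lt_orderOf hm0 (by omega))
  let φ := MulAut.conj Q⁻¹
  have hφ : φ (b ^ m) = zmat F := by simpa [φ] using hQ
  have hbb : b * b = 1 := (map_eq_one_iff φ φ.injective).1 <| by
    rw [map_mul]
    exact mul_self_eq_one_of_commute_zmat (hφ ▸ (Commute.self_pow b m).map φ)
  refine orderOf_eq_prime (by rw [sq, hbb]) ?_
  rintro rfl
  rw [orderOf_one] at hm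
  omega

instance : IsMulCommutative (Subgroup.centralizer {zmat F}) :=
  .of_setLike_mul_comm fun _ ha _ hb => (commute_of_commute_zmat
    (Subgroup.mem_centralizer_singleton_iff.1 ha) (Subgroup.mem_centralizer_singleton_iff.1 hb)).eq

end Matrix.SpecialLinearGroup

open Matrix.SpecialLinearGroup

theorem slGalAction_zmat {F : Type*} [Field F] [CharP F 2] (σ : F ≃+* F) :
    slGalAction F σ (zmat F) = zmat F := by
  ext i j
  fin_cases i <;> fin_cases j <;> simp [slGalAction, slConjAut, coe_zmat]

namespace SemidirectProduct

theorem rightHom_mem_zpowers_of_mem_sup {N G : Type*} [Group N] [Group G] {φ : G →* MulAut N}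
    {ψ : G} {x : N ⋊[φ] G} (hx : x ∈ inl.range ⊔ Subgroup.zpowers (inr ψ)) :
    rightHom x ∈ Subgroup.zpowers ψ := by
  refine (sup_le (c := Subgroup.comap rightHom (Subgroup.zpowers ψ)) ?_ ?_) hx
  · rintro _ ⟨n, rfl⟩
    simp
  · simp [Subgroup.mem_zpowers]

variable {F : Type*} [Field F] [CharP F 2]

theorem commute_inr_inl_zmat (σ : F ≃+* F) :
    Commute (inr σ : SL(2, F) ⋊[slGalAction F] (F ≃+* F)) (inl (zmat F)) := by
  have h := inl_aut (φ := slGalAction F) σ (zmat F)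
  rw [slGalAction_zmat, map_inv] at h
  exact (eq_mul_inv_iff_mul_eq.mp h).symm

variable (F) in
def zmatCentralizer : Subgroup (SL(2, F) ⋊[slGalAction F] (F ≃+* F)) :=
  (Subgroup.centralizer {zmat F}).map inl

instance : IsMulCommutative (zmatCentralizer F) :=
  inferInstanceAs (IsMulCommutative ((Subgroup.centralizer {zmat F}).map inl))

theorem inl_mem_zmatCentralizer_iff (b : SL(2, F)) :
    inl b ∈ zmatCentralizer F ↔ Commute b (zmat F) :=
  (Subgroup.mem_map_iff_mem inl_injective).trans Subgroup.mem_centralizer_singleton_iff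

theorem commute_inl_zmat_of_mem_zmatCentralizer {a : SL(2, F) ⋊[slGalAction F] (F ≃+* F)}
    (ha : a ∈ zmatCentralizer F) : Commute a (inl (zmat F)) := by
  obtain ⟨b, hb, rfl⟩ := ha
  exact Commute.map (Subgroup.mem_centralizer_singleton_iff.1 hb) inl

theorem mul_self_eq_one_of_mem_zmatCentralizer {a : SL(2, F) ⋊[slGalAction F] (F ≃+* F)}
    (ha : a ∈ zmatCentralizer F) : a * a = 1 := by
  obtain ⟨b, hb, rfl⟩ := ha
  rw [← map_mul, mul_self_eq_one_of_commute_zmat (Subgroup.mem_centralizer_singleton_iff.1 hb),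
    map_one]

theorem inr_conj_mem_zmatCentralizer (σ : F ≃+* F) {a : SL(2, F) ⋊[slGalAction F] (F ≃+* F)}
    (ha : a ∈ zmatCentralizer F) : inr σ * a * (inr σ)⁻¹ ∈ zmatCentralizer F := by
  obtain ⟨b, hb, rfl⟩ := ha
  have hb' : Commute b (zmat F) := Subgroup.mem_centralizer_singleton_iff.1 hb
  rw [← map_inv (inr (φ := slGalAction F)), ← inl_aut, inl_mem_zmatCentralizer_iff,
    ← slGalAction_zmat σ]
  exact hb'.map _

theorem mul_inv_inr_right_mem_zmatCentralizer {w : SL(2, F) ⋊[slGalAction F] (F ≃+* F)}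
    (hw : Commute w (inl (zmat F))) : w * (inr w.right)⁻¹ ∈ zmatCentralizer F := by
  have hwl : inl w.left = w * (inr w.right)⁻¹ :=
    eq_mul_inv_iff_mul_eq.mpr (inl_left_mul_inr_right w)
  rw [← hwl, inl_mem_zmatCentralizer_iff]
  exact Commute.of_map (f := inl (φ := slGalAction F)) inl_injective
    (hwl ▸ hw.mul_left (commute_inr_inl_zmat w.right).inv_left)

theorem exists_conj_eq_inl_zmat_mul_inr {y : SL(2, F) ⋊[slGalAction F] (F ≃+* F)} {t : ℕ}
    (ht : Odd t) (hyt : y ^ t = inl (zmat F)) :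
    ∃ c ∈ zmatCentralizer F, c⁻¹ * y * c = inl (zmat F) * inr (rightHom y) := by
  have hy2t : y ^ (2 * t) = 1 := by
    rw [pow_mul', hyt, ← map_pow, sq, mul_self_eq_one_of_commute_zmat (Commute.refl _), map_one]
  have hσt : rightHom y ^ t = 1 := by rw [← map_pow, hyt, rightHom_inl]
  set w := y ^ (t + 1)
  obtain ⟨m, rfl⟩ := ht
  have hwt : w ^ (2 * m + 1) = 1 := by
    rw [← pow_mul, show (2 * m + 1 + 1) * (2 * m + 1) = 2 * (2 * m + 1) * (m + 1) by ring,
      pow_mul, hy2t, one_pow]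
  have hyw : y = inl (zmat F) * w := by
    rw [← hyt, ← pow_add, show 2 * m + 1 + (2 * m + 1 + 1) = 2 * (2 * m + 1) + 1 by ring,
      pow_succ, hy2t, one_mul]
  have hwσ : w.right = rightHom y := by
    change rightHom w = rightHom y
    rw [map_pow, pow_succ, hσt, one_mul]
  have hwz : Commute w (inl (zmat F)) := hyt ▸ Commute.pow_pow_self y _ _
  obtain ⟨c, hcA, hc⟩ := Subgroup.exists_conj_eq_of_odd
    (fun _ => mul_self_eq_one_of_mem_zmatCentralizer) (fun _ => inr_conj_mem_zmatCentralizer _)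
    (hwσ ▸ mul_inv_inr_right_mem_zmatCentralizer hwz) ⟨m, rfl⟩ hwt
    (by rw [← map_pow, hσt, map_one])
  refine ⟨c, hcA, ?_⟩
  calc c⁻¹ * y * c = inl (zmat F) * (c⁻¹ * w * c) := by
        rw [hyw, ← mul_assoc, (commute_inl_zmat_of_mem_zmatCentralizer hcA).inv_left.eq]
        simp only [mul_assoc]
    _ = inl (zmat F) * inr (rightHom y) := by rw [hc]

end SemidirectProduct

open SemidirectProduct

theorem stmt_11_general {F : Type*} [Field F] [Finite F] [CharP F 2] (ψ : F ≃+* F)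
    (x : Matrix.SpecialLinearGroup (Fin 2) F ⋊[slGalAction F] (F ≃+* F))
    (G : Subgroup (Matrix.SpecialLinearGroup (Fin 2) F ⋊[slGalAction F] (F ≃+* F)))
    (hG : G = SemidirectProduct.inl.range ⊔ Subgroup.zpowers (SemidirectProduct.inr ψ))
    (hxG : x ∈ G) (hxeven : Even (orderOf x))
    (t : ℕ) (ht : t = orderOf (SemidirectProduct.rightHom x)) (htodd : Odd t) :
    (SemidirectProduct.rightHom (x ^ t) = 1 ∧ orderOf (x ^ t) = 2) ∧
    ∃ g ∈ G, ∀ y ∈ Subgroup.zpowers x,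
      g⁻¹ * y * g ∈
        Subgroup.zpowers (SemidirectProduct.inl (zmat F)) ⊔
          Subgroup.zpowers (SemidirectProduct.inr (ψ ^ 2 ^ (orderOf ψ).factorization 2)) := by
  subst hG
  have hxt : rightHom (x ^ t) = 1 := by rw [map_pow, ht, pow_orderOf_eq_one]
  obtain ⟨b, hb⟩ : x ^ t ∈ inl.range := by rwa [range_inl_eq_ker_rightHom, MonoidHom.mem_ker]
  have hord : orderOf (x ^ t) = orderOf b := by
    rw [← hb, orderOf_injective (inl (φ := slGalAction F)) inl_injective]
  have hb2 : orderOf b = 2 :=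
    orderOf_eq_two_of_even (hord ▸ even_orderOf_pow_of_odd hxeven htodd) (orderOf_pos b).ne'
  refine ⟨⟨hxt, hord.trans hb2⟩, ?_⟩
  obtain ⟨Q, hQ⟩ := exists_conj_eq_zmat (u := b)
    (by rw [← sq]; exact ((orderOf_eq_iff two_pos).1 hb2).1) (by rintro rfl; simp at hb2)
  obtain ⟨_, ⟨c, -, rfl⟩, hc⟩ := exists_conj_eq_inl_zmat_mul_inr (y := (inl Q)⁻¹ * x * inl Q)
    htodd (by rw [inv_conj_pow, ← hb, ← map_inv, ← map_mul, ← map_mul, hQ])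
  refine ⟨inl Q * inl c, Subgroup.mem_sup_left ⟨Q * c, map_mul _ _ _⟩,
    fun y hy => Subgroup.conj_mem_of_mem_zpowers ?_ hy⟩
  have hσ : rightHom x ∈ Subgroup.zpowers (ψ ^ 2 ^ (orderOf ψ).factorization 2) :=
    Subgroup.mem_zpowers_pow_of_coprime (rightHom_mem_zpowers_of_mem_sup hxG)
      (Nat.coprime_two_right.2 (ht ▸ htodd))
  rw [show (inl Q * inl c)⁻¹ * x * (inl Q * inl c) = (inl c)⁻¹ * ((inl Q)⁻¹ * x * inl Q) * inl c
    by group, hc]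
  simp only [map_mul, map_inv, rightHom_inl, inv_one, one_mul, mul_one]
  exact Subgroup.mul_mem _ (Subgroup.mem_sup_left (Subgroup.mem_zpowers _))
    (Subgroup.mem_sup_right (by rw [← MonoidHom.map_zpowers]; exact Subgroup.mem_map_of_mem _ hσ))

/-- Let `q` be even and `G = SL₂(q).⟨ψ⟩ ≤ ΓL₂(q)` (realised inside `SL₂(q) ⋊ Gal`), with
`ψ` a field automorphism. If `x ∈ G` has even order and the coset `SL₂(q)x` has odd order
`t` in `G/SL₂(q)`, then `x^t` is an involution of `SL₂(q)`, and `⟨x⟩` is `G`-conjugate to a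
subgroup of `⟨z⟩ × ⟨ψ⟩_{2'}`, where `z = [[0,1],[1,0]]` and `⟨ψ⟩_{2'}` is the Hall
`2'`-part of `⟨ψ⟩`. -/
theorem stmt_11 {F : Type*} [Field F] [Finite F] [CharP F 2] (ψ : F ≃+* F)
    (x : Matrix.SpecialLinearGroup (Fin 2) F ⋊[slGalAction F] (F ≃+* F))
    (G : Subgroup (Matrix.SpecialLinearGroup (Fin 2) F ⋊[slGalAction F] (F ≃+* F)))
    (hG : G = SemidirectProduct.inl.range ⊔ Subgroup.zpowers (SemidirectProduct.inr ψ))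
    (hxG : x ∈ G) (hxeven : Even (orderOf x)) (hxpos : 0 < orderOf x)
    (t : ℕ) (ht : t = orderOf (SemidirectProduct.rightHom x)) (htodd : Odd t) :
    (SemidirectProduct.rightHom (x ^ t) = 1 ∧ orderOf (x ^ t) = 2) ∧
    ∃ g ∈ G, ∀ y ∈ Subgroup.zpowers x,
      g⁻¹ * y * g ∈
        Subgroup.zpowers (SemidirectProduct.inl (zmat F)) ⊔
          Subgroup.zpowers (SemidirectProduct.inr (ψ ^ 2 ^ (orderOf ψ).factorization 2)) :=
  stmt_11_general ψ x G hG hxG hxeven t ht htodd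
end

section
/- For n ≥ 25, if X = S_a ≀ S_b in its imprimitive action with n = ab, a,b ≥ 2, then (a!)^b · b! ≥ 2^{n+1}; consequently any maximal imprimitive subgroup X of S_n or A_n satisfies |X| ≥ 2^n. -/
private lemma fact_ge_two_pow : ∀ m : ℕ, 5 ≤ m → 2 ^ (m + 1) ≤ m.factorial := by
  intro m hm
  induction m, hm using Nat.le_induction with
  | base => norm_num [Nat.factorial]
  | succ k hk ih =>
      rw [Nat.factorial_succ]
      calc 2 ^ (k + 1 + 1) = 2 * 2 ^ (k + 1) := by ring
        _ ≤ (k + 1) * k.factorial := Nat.mul_le_mul (by omega) ih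

/-- For `n ≥ 25` and `n = ab` with `a, b ≥ 2`, the order `(a!)^b · b!` of the imprimitive
wreath product `S_a ≀ S_b` of degree `n` is at least `2^(n+1)`; consequently any subgroup
`X` (of `S_n` or `A_n`) whose order `N` satisfies `(a!)^b · b! ≤ 2N` (as for a maximal
imprimitive subgroup, whose index in the full partition stabiliser is at most 2)
satisfies `N ≥ 2^n`. -/
theorem stmt_13 (n a b : ℕ) (hn : 25 ≤ n) (h : n = a * b) (ha : 2 ≤ a) (hb : 2 ≤ b) :
    2 ^ (n + 1) ≤ a.factorial ^ b * b.factorial ∧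
      ∀ N : ℕ, a.factorial ^ b * b.factorial ≤ 2 * N → 2 ^ n ≤ N := by
  have key : 2 ^ (n + 1) ≤ a.factorial ^ b * b.factorial := by
    rcases Nat.lt_or_ge a 5 with h5 | h5
    · interval_cases a
      · -- a = 2, so b ≥ 13
        have hb13 : 13 ≤ b := by omega
        have hbf : 2 ^ (b + 1) ≤ b.factorial := fact_ge_two_pow b (by omega)
        calc 2 ^ (n + 1) = 2 ^ b * 2 ^ (b + 1) := by
              rw [← pow_add]; congr 1; omega
          _ ≤ (Nat.factorial 2) ^ b * b.factorial := by
              exact Nat.mul_le_mul (by norm_num [Nat.factorial]) hbf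
      · -- a = 3, so b ≥ 9
        have hb9 : 9 ≤ b := by omega
        have hbf : 2 ^ (b + 1) ≤ b.factorial := fact_ge_two_pow b (by omega)
        calc 2 ^ (n + 1) = (2 ^ 2) ^ b * 2 ^ (b + 1) := by
              rw [← pow_mul, ← pow_add]; congr 1; omega
          _ ≤ (Nat.factorial 3) ^ b * b.factorial := by
              refine Nat.mul_le_mul (Nat.pow_le_pow_left (by norm_num [Nat.factorial]) b) hbf
      · -- a = 4
        calc 2 ^ (n + 1) = (2 ^ 4) ^ b * 2 := by
              rw [← pow_mul, ← pow_succ]; congr 1; omega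
          _ ≤ (Nat.factorial 4) ^ b * b.factorial := by
              refine Nat.mul_le_mul (Nat.pow_le_pow_left (by norm_num [Nat.factorial]) b)
                (le_trans (by norm_num) (Nat.factorial_le hb))
    · -- a ≥ 5
      have haf : 2 ^ (a + 1) ≤ a.factorial := fact_ge_two_pow a h5
      calc 2 ^ (n + 1) ≤ 2 ^ ((a + 1) * b) := by
            refine Nat.pow_le_pow_right (by norm_num) ?_; nlinarith
        _ = (2 ^ (a + 1)) ^ b := by rw [pow_mul]
        _ ≤ a.factorial ^ b * 1 := by
            rw [mul_one]; exact Nat.pow_le_pow_left haf b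
        _ ≤ a.factorial ^ b * b.factorial := Nat.mul_le_mul_left _ b.factorial_pos
  refine ⟨key, fun N hN => ?_⟩
  have : 2 * 2 ^ n ≤ 2 * N := by
    calc 2 * 2 ^ n = 2 ^ (n + 1) := (pow_succ' 2 n).symm
      _ ≤ a.factorial ^ b * b.factorial := key
      _ ≤ 2 * N := hN
  omega
end

section
/- For n ≥ 25 and any factorisation n = ab with a, b ≥ 2, (a!)^b · b! ≤ 2 · (⌈n/2⌉!)², with equality only when b = 2. -/
open Nat

private lemma asc_mono' {m n : ℕ} (h : m ≤ n) : ∀ k, m.ascFactorial k ≤ n.ascFactorial k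
  | 0 => le_refl 1
  | k + 1 => by
    rw [Nat.ascFactorial_succ, Nat.ascFactorial_succ]
    exact Nat.mul_le_mul (by omega) (asc_mono' h k)

private lemma asc_peel (n k : ℕ) : n.ascFactorial (k + 1) = n * (n + 1).ascFactorial k := by
  rw [Nat.ascFactorial_succ, ← Nat.succ_ascFactorial]

private lemma pow_lem : ∀ a, 2 ≤ a → 3 * a.factorial < (a + 1) ^ a := by
  intro a ha
  induction a, ha using Nat.le_induction with
  | base => norm_num [Nat.factorial]
  | succ a ha ih =>
    calc 3 * (a + 1).factorial = (a + 1) * (3 * a.factorial) := by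
          rw [Nat.factorial_succ]; ring
      _ < (a + 1) * (a + 1) ^ a := by gcongr

      _ = (a + 1) ^ (a + 1) := by rw [pow_succ, mul_comm]
      _ ≤ (a + 2) ^ (a + 1) := Nat.pow_le_pow_left (by omega) _

private lemma catalan_lem : ∀ a, 2 ≤ a →
    2 * ((a + 1).factorial * a.factorial) ≤ (2 * a).factorial := by
  intro a ha
  induction a, ha using Nat.le_induction with
  | base => decide
  | succ a ha ih =>
    have h2 : (2 * (a + 1)).factorial = (2 * a + 2) * ((2 * a + 1) * (2 * a).factorial) := by
      have h : 2 * (a + 1) = (2 * a + 1) + 1 := by ring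
      rw [h, Nat.factorial_succ, Nat.factorial_succ]
    have h1 : 2 * ((a + 1 + 1).factorial * (a + 1).factorial)
        = ((a + 2) * (a + 1)) * (2 * ((a + 1).factorial * a.factorial)) := by
      rw [Nat.factorial_succ (a + 1), Nat.factorial_succ a]
      ring
    rw [h1, h2]
    calc ((a + 2) * (a + 1)) * (2 * ((a + 1).factorial * a.factorial))
        ≤ ((a + 2) * (a + 1)) * (2 * a).factorial := Nat.mul_le_mul_left _ ih
      _ ≤ ((2 * a + 2) * (2 * a + 1)) * (2 * a).factorial := by
          apply Nat.mul_le_mul_right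
          nlinarith
      _ = (2 * a + 2) * ((2 * a + 1) * (2 * a).factorial) := by ring

/-- lower bound on the rising product `(m+1)(m+2)⋯(m+a)` when `a ≤ m`. -/
private lemma asc_lower {a m : ℕ} (ha : 2 ≤ a) (hm : a ≤ m) :
    2 * (m + 1) * a.factorial ≤ (m + 1).ascFactorial a := by
  obtain ⟨a', rfl⟩ : ∃ a', a = a' + 1 := ⟨a - 1, by omega⟩
  rw [asc_peel]
  -- key : 2 * (a'+1)! ≤ (a'+3).ascFactorial a'
  have h2 : (a' + 2).factorial * (a' + 3).ascFactorial a' = (2 * (a' + 1)).factorial := by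
    have := Nat.factorial_mul_ascFactorial (a' + 2) a'
    rw [this]; congr 1; ring
  have h3 : (a' + 2).factorial * (2 * (a' + 1).factorial)
      ≤ (a' + 2).factorial * (a' + 3).ascFactorial a' := by
    rw [h2]
    calc (a' + 2).factorial * (2 * (a' + 1).factorial)
        = 2 * ((a' + 1 + 1).factorial * (a' + 1).factorial) := by ring_nf
      _ ≤ (2 * (a' + 1)).factorial := catalan_lem (a' + 1) (by omega)
  have hkey : 2 * (a' + 1).factorial ≤ (a' + 3).ascFactorial a' :=
    Nat.le_of_mul_le_mul_left h3 (Nat.factorial_pos _)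
  have hmono : (a' + 3).ascFactorial a' ≤ (m + 2).ascFactorial a' :=
    asc_mono' (by omega) a'
  calc 2 * (m + 1) * (a' + 1).factorial = (m + 1) * (2 * (a' + 1).factorial) := by ring
    _ ≤ (m + 1) * (a' + 3).ascFactorial a' := Nat.mul_le_mul_left _ hkey
    _ ≤ (m + 1) * (m + 2).ascFactorial a' := Nat.mul_le_mul_left _ hmono

private lemma key : ∀ b, 2 ≤ b → ∀ a, 2 ≤ a →
    a.factorial ^ b * b.factorial ≤ 2 * ((a * b + 1) / 2).factorial ^ 2 ∧
      (3 ≤ b → a.factorial ^ b * b.factorial < 2 * ((a * b + 1) / 2).factorial ^ 2) := by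
  intro b
  induction b using Nat.strong_induction_on with
  | _ b ih =>
    intro hb a ha
    rcases Nat.lt_or_ge b 4 with hb4 | hb4
    · interval_cases b
      · -- b = 2 : equality
        have hm : (a * 2 + 1) / 2 = a := by omega
        rw [hm]
        constructor
        · show a.factorial ^ 2 * 2 ≤ 2 * a.factorial ^ 2
          ring_nf; exact le_refl _
        · omega
      · -- b = 3
        have hlt : a.factorial ^ 3 * (3).factorial < 2 * ((a * 3 + 1) / 2).factorial ^ 2 := by
          set k := (a + 1) / 2 with hk
          have hm : (a * 3 + 1) / 2 = a + k := by omega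
          have h1 : a.factorial * (a + 1) ^ k ≤ (a + k).factorial :=
            Nat.factorial_mul_pow_le_factorial
          have h2 : a ≤ 2 * k := by omega
          have hp : 3 * a.factorial < (a + 1) ^ a := pow_lem a ha
          rw [hm]
          have hchain : a.factorial ^ 3 * (3).factorial < 2 * (a.factorial * (a + 1) ^ k) ^ 2 := by
            have e1 : 2 * (a.factorial * (a + 1) ^ k) ^ 2
                = 2 * a.factorial ^ 2 * (a + 1) ^ (2 * k) := by
              rw [mul_pow, ← pow_mul]; ring
            have e2 : a.factorial ^ 3 * (3).factorial
                = 2 * a.factorial ^ 2 * (3 * a.factorial) := by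
              show a.factorial ^ 3 * 6 = _
              ring
            rw [e1, e2]
            have h5 : (a + 1) ^ a ≤ (a + 1) ^ (2 * k) := Nat.pow_le_pow_right (by omega) h2
            have h6 : 3 * a.factorial < (a + 1) ^ (2 * k) := lt_of_lt_of_le hp h5
            gcongr 2 * a.factorial ^ 2 * ?_
          calc a.factorial ^ 3 * (3).factorial
              < 2 * (a.factorial * (a + 1) ^ k) ^ 2 := hchain
            _ ≤ 2 * (a + k).factorial ^ 2 := by
                exact Nat.mul_le_mul_left _ (Nat.pow_le_pow_left h1 2)
        exact ⟨le_of_lt hlt, fun _ => hlt⟩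
    · -- b ≥ 4 : step from b - 2
      obtain ⟨b', rfl⟩ : ∃ b', b = b' + 2 := ⟨b - 2, by omega⟩
      have hb' : 2 ≤ b' := by omega
      obtain ⟨ihle, -⟩ := ih b' (by omega) hb' a ha
      set m := (a * b' + 1) / 2 with hmdef
      have hab2 : 2 * a ≤ a * b' := by nlinarith
      have hab2' : 2 * b' ≤ a * b' := by nlinarith
      have hma : a ≤ m := by omega
      have hmb : b' ≤ m := by omega
      have hM : (a * (b' + 2) + 1) / 2 = m + a := by
        have : a * (b' + 2) = a * b' + 2 * a := by ring
        omega
      have hfa : m.factorial * (m + 1).ascFactorial a = (m + a).factorial :=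
        Nat.factorial_mul_ascFactorial m a
      have hasc : 2 * (m + 1) * a.factorial ≤ (m + 1).ascFactorial a := asc_lower ha hma
      have hnum : (b' + 1) * (b' + 2) < (2 * (m + 1)) ^ 2 := by nlinarith
      have hlt : a.factorial ^ (b' + 2) * (b' + 2).factorial
          < 2 * ((a * (b' + 2) + 1) / 2).factorial ^ 2 := by
        rw [hM]
        have e1 : a.factorial ^ (b' + 2) * (b' + 2).factorial
            = (a.factorial ^ b' * b'.factorial) * (a.factorial ^ 2 * ((b' + 1) * (b' + 2))) := by
          rw [Nat.factorial_succ (b' + 1), Nat.factorial_succ b']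
          ring
        have hpos2 : 0 < 2 * m.factorial ^ 2 * a.factorial ^ 2 := by positivity
        calc a.factorial ^ (b' + 2) * (b' + 2).factorial
            = (a.factorial ^ b' * b'.factorial) * (a.factorial ^ 2 * ((b' + 1) * (b' + 2))) := e1
          _ ≤ (2 * m.factorial ^ 2) * (a.factorial ^ 2 * ((b' + 1) * (b' + 2))) :=
              Nat.mul_le_mul_right _ ihle
          _ = (2 * m.factorial ^ 2 * a.factorial ^ 2) * ((b' + 1) * (b' + 2)) := by ring
          _ < (2 * m.factorial ^ 2 * a.factorial ^ 2) * (2 * (m + 1)) ^ 2 := by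
              gcongr 2 * m.factorial ^ 2 * a.factorial ^ 2 * ?_
          _ = 2 * (m.factorial * (2 * (m + 1) * a.factorial)) ^ 2 := by ring
          _ ≤ 2 * (m.factorial * (m + 1).ascFactorial a) ^ 2 := by
              apply Nat.mul_le_mul_left
              exact Nat.pow_le_pow_left (Nat.mul_le_mul_left _ hasc) 2
          _ = 2 * (m + a).factorial ^ 2 := by rw [hfa]
      exact ⟨le_of_lt hlt, fun _ => hlt⟩

/-- For `n ≥ 25` and any factorisation `n = ab` with `a, b ≥ 2`,
`(a!)^b · b! ≤ 2 · (⌈n/2⌉!)²`, with equality only when `b = 2`. -/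
theorem stmt_14 (n a b : ℕ) (hn : 25 ≤ n) (h : n = a * b) (ha : 2 ≤ a) (hb : 2 ≤ b) :
    a.factorial ^ b * b.factorial ≤ 2 * ((n + 1) / 2).factorial ^ 2 ∧
      (a.factorial ^ b * b.factorial = 2 * ((n + 1) / 2).factorial ^ 2 → b = 2) := by
  subst h
  obtain ⟨h1, h2⟩ := key b hb a ha
  refine ⟨h1, fun heq => ?_⟩
  by_contra hne
  exact absurd heq (_root_.ne_of_lt (h2 (by omega)))
end

section
/- For n ≥ 25 and any factorisation n = ab with a ≥ 2 and b ≥ 3, (a!)^b · b! ≤ 6 · (⌈n/3⌉!)³. -/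
/-!
Write `m = ⌈ab/3⌉`. Passing from `b` to `b + 3` raises `m` by `a`, and
`(m + a)! = C(m + a, a) · m! · a!`; as `C(m + a, a) ≥ b + 3`, the new factor `C(m + a, a)³`
absorbs the extra factor `a!³ (b + 1)(b + 2)(b + 3)` of the left side. The base cases
`b = 3, 4, 5` follow from `a! (a + 1)^k ≤ (a + k)!` and `2^a a! ≤ (a + 1)^a`.
-/

open Nat

lemma two_pow_mul_factorial_le_succ_pow (n : ℕ) : 2 ^ n * n ! ≤ (n + 1) ^ n := by
  induction n with
  | zero => simp
  | succ n ih =>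
    have bernoulli : (n + 1) ^ (n + 1) + (n + 1) * (n + 1) ^ n * 1 ≤ (n + 1 + 1) ^ (n + 1) := by
      simpa using
        pow_add_mul_le_add_pow (a := n + 1) (b := 1) (by positivity) (by positivity) (n + 1)
    calc 2 ^ (n + 1) * (n + 1)! = 2 * (n + 1) * (2 ^ n * n !) := by
          rw [factorial_succ]; ring
      _ ≤ 2 * (n + 1) * (n + 1) ^ n := Nat.mul_le_mul_left _ ih
      _ = (n + 1) ^ (n + 1) + (n + 1) * (n + 1) ^ n * 1 := by ring
      _ ≤ (n + 1 + 1) ^ (n + 1) := bernoulli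

lemma factorial_pow_mul_factorial_le_of_two_pow {a j k : ℕ} (hj : (3 + j)! ≤ 6 * 2 ^ (a * j))
    (hk : a * j ≤ 3 * k) : a ! ^ (3 + j) * (3 + j)! ≤ 6 * (a + k)! ^ 3 := by
  have hpow : (2 ^ a * a !) ^ j ≤ (a + 1) ^ (3 * k) :=
    calc (2 ^ a * a !) ^ j ≤ ((a + 1) ^ a) ^ j := by
          gcongr; exact two_pow_mul_factorial_le_succ_pow a
      _ = (a + 1) ^ (a * j) := (pow_mul _ _ _).symm
      _ ≤ (a + 1) ^ (3 * k) := Nat.pow_le_pow_right (by omega) hk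
  calc a ! ^ (3 + j) * (3 + j)! ≤ a ! ^ (3 + j) * (6 * 2 ^ (a * j)) := Nat.mul_le_mul_left _ hj
    _ = 6 * (a ! ^ 3 * (2 ^ a * a !) ^ j) := by ring
    _ ≤ 6 * (a ! ^ 3 * (a + 1) ^ (3 * k)) := by gcongr
    _ = 6 * (a ! * (a + 1) ^ k) ^ 3 := by ring
    _ ≤ 6 * (a + k)! ^ 3 := by gcongr; exact factorial_mul_pow_le_factorial

lemma le_add_choose {a c m : ℕ} (ha : 2 ≤ a) (hc : 3 ≤ c) (hm : 2 * c ≤ 3 * m) :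
    c + 3 ≤ (m + a).choose a := by
  have two_mul_choose : 2 * (m + 2).choose 2 = (m + 2) * (m + 1) := by
    rw [choose_two_right, Nat.mul_div_cancel' (even_mul_pred_self (m + 2)).two_dvd]; rfl
  calc c + 3 ≤ (m + 2).choose 2 := by nlinarith
    _ = (m + 2).choose m := choose_symm_add.symm
    _ ≤ (m + a).choose m := choose_le_choose m (by omega)
    _ = (m + a).choose a := choose_symm_add

lemma factorial_pow_mul_factorial_le_of_add_three {a c m : ℕ} (ha : 2 ≤ a) (hc : 3 ≤ c)
    (hm : 2 * c ≤ 3 * m) (ih : a ! ^ c * c ! ≤ 6 * m ! ^ 3) :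
    a ! ^ (c + 3) * (c + 3)! ≤ 6 * (m + a)! ^ 3 := by
  set C := (m + a).choose a
  have hC := le_add_choose ha hc hm
  have hcube : (c + 1) * (c + 2) * (c + 3) ≤ C ^ 3 :=
    calc (c + 1) * (c + 2) * (c + 3) ≤ (c + 3) ^ 3 := by nlinarith
      _ ≤ C ^ 3 := by gcongr
  calc a ! ^ (c + 3) * (c + 3)!
        = (a ! ^ c * c !) * (a ! ^ 3 * ((c + 1) * (c + 2) * (c + 3))) := by
          simp only [factorial_succ]; ring
    _ ≤ (6 * m ! ^ 3) * (a ! ^ 3 * C ^ 3) := by gcongr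
    _ = 6 * (C * m ! * a !) ^ 3 := by ring
    _ = 6 * (m + a)! ^ 3 := by rw [add_choose_mul_factorial_mul_factorial]

theorem factorial_pow_mul_factorial_le {a b : ℕ} (ha : 2 ≤ a) (hb : 3 ≤ b) :
    a ! ^ b * b ! ≤ 6 * ((a * b + 2) / 3)! ^ 3 := by
  induction b using Nat.strong_induction_on with
  | _ b ih =>
  obtain ⟨c, rfl⟩ : ∃ c, b = c + 3 := ⟨b - 3, by omega⟩
  by_cases hc : 3 ≤ c
  · have hceil : (a * (c + 3) + 2) / 3 = (a * c + 2) / 3 + a := by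
      rw [mul_add]; omega
    rw [hceil]
    have hac : 2 * c ≤ a * c := Nat.mul_le_mul_right c ha
    exact factorial_pow_mul_factorial_le_of_add_three ha hc (by omega) (ih c (by omega) hc)
  · have of_base (hj : (3 + c)! ≤ 6 * 2 ^ (a * c)) :
        a ! ^ (c + 3) * (c + 3)! ≤ 6 * ((a * (c + 3) + 2) / 3)! ^ 3 := by
      have hceil : (a * (c + 3) + 2) / 3 = a + (a * c + 2) / 3 := by
        rw [mul_add]; omega
      rw [hceil, add_comm c]
      exact factorial_pow_mul_factorial_le_of_two_pow hj (by omega)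
    obtain rfl | rfl | rfl : c = 0 ∨ c = 1 ∨ c = 2 := by omega
    · exact of_base (by simp [factorial])
    · exact of_base <| calc (3 + 1)! = 6 * 2 ^ 2 := by decide
        _ ≤ 6 * 2 ^ (a * 1) := by gcongr <;> omega
    · obtain rfl | ha3 := eq_or_lt_of_le ha
      · -- `2 ^ a * a ! ≤ (a + 1) ^ a` is too lossy here: `5! > 6 * 2 ^ 4`
        decide
      · exact of_base <| calc (3 + 2)! ≤ 6 * 2 ^ 6 := by decide
          _ ≤ 6 * 2 ^ (a * 2) := by gcongr <;> omega

theorem stmt_15_general (n a b : ℕ) (h : n = a * b) (ha : 2 ≤ a) (hb : 3 ≤ b) :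
    a.factorial ^ b * b.factorial ≤ 6 * ((n + 2) / 3).factorial ^ 3 :=
  h ▸ factorial_pow_mul_factorial_le ha hb

/-- For `n ≥ 25` and any factorisation `n = ab` with `a ≥ 2` and `b ≥ 3`,
`(a!)^b · b! ≤ 6 · (⌈n/3⌉!)³`. -/
theorem stmt_15 (n a b : ℕ) (hn : 25 ≤ n) (h : n = a * b) (ha : 2 ≤ a) (hb : 3 ≤ b) :
    a.factorial ^ b * b.factorial ≤ 6 * ((n + 2) / 3).factorial ^ 3 :=
  stmt_15_general n a b h ha hb
end
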